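/- arXiv:1409.3581 — 4 statements merged into one kernel-verified Lean document; each statement's English description precedes it below -/
import Mathlib

section
/- Let μ > 0, c_CH > 0, F_T > 0 and R_eq = 2π c_CH / F_T. For every initial radius R₀ > 0 there exists a unique function R : [0,∞) → ℝ with R(0) = R₀ that is differentiable and satisfies R'(t) = (c_CH/(4μ))·(1/R(t) − 1/R_eq) for all t ≥ 0; moreover this solution satisfies min(R₀, R_eq) ≤ R(t) ≤ max(R₀, R_eq) for all t ≥ 0 (in particular R(t) > 0 for all t, so the solution is global). -/
/-!
The right-hand side `k (1/R - 1/R_eq)` points towards `R_eq`, so a barrier argument keeps every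
solution between `min R₀ R_eq` and `max R₀ R_eq`. Replacing `R` by `max R ℓ` for a level
`0 < ℓ < min R₀ R_eq` turns the field into a bounded, globally Lipschitz one, which has a global
solution by Picard–Lindelöf (local solutions on `(-n, n)` glue by uniqueness). That solution is
confined to the region where the two fields agree, and the same Lipschitz bound gives uniqueness.
-/

open Real Set Filter Topology
open scoped NNReal

theorem exists_forall_hasDerivAt_of_lipschitzWith_of_norm_le
    {E : Type*} [NormedAddCommGroup E] [NormedSpace ℝ E] [CompleteSpace E]
    {f : E → E} {K L : ℝ≥0} (hf : LipschitzWith K f) (hL : ∀ x, ‖f x‖ ≤ L) (x₀ : E) :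
    ∃ α : ℝ → E, α 0 = x₀ ∧ ∀ t, HasDerivAt α (f (α t)) t := by
  have hloc (n : ℕ) :
      ∃ α : ℝ → E, α 0 = x₀ ∧ ∀ t : ℝ, |t| < n → HasDerivAt α (f (α t)) t := by
    have hpl : IsPicardLindelof (fun _ ↦ f) (tmin := -n) (tmax := n) ⟨0, by simp⟩
        x₀ (L * n) 0 L K :=
      .of_time_independent (fun x _ ↦ hL x) hf.lipschitzOnWith (by simp)
    obtain ⟨α, hα0, hα⟩ := hpl.exists_eq_forall_mem_Icc_hasDerivWithinAt₀
    refine ⟨α, hα0, fun t ht ↦ ?_⟩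
    obtain ⟨htn, htn'⟩ := abs_lt.1 ht
    exact (hα t ⟨htn.le, htn'.le⟩).hasDerivAt (Icc_mem_nhds htn htn')
  choose α hα0 hα using hloc
  have hagree {n m : ℕ} {t : ℝ} (hn : |t| < n) (hm : |t| < m) : α n t = α m t := by
    set p := min n m
    have hp : |t| < p := by simp [p, hn, hm]
    have hsol {q : ℕ} (hq : p ≤ q) : ∀ s ∈ Ioo (-(p : ℝ)) p,
        HasDerivAt (α q) (f (α q s)) s ∧ α q s ∈ univ := fun s hs ↦
      ⟨hα q s ((abs_lt.2 hs).trans_le (by exact_mod_cast hq)), trivial⟩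
    refine ODE_solution_unique_of_mem_Ioo (v := fun _ ↦ f) (fun _ _ ↦ hf.lipschitzOnWith)
      (t₀ := 0) ?_ (hsol (min_le_left n m)) (hsol (min_le_right n m)) ?_ (abs_lt.1 hp)
    · have hp0 : (0 : ℝ) < p := (abs_nonneg t).trans_lt hp
      exact ⟨neg_lt_zero.2 hp0, hp0⟩
    · rw [hα0, hα0]
  let N (t : ℝ) : ℕ := ⌈|t|⌉₊ + 1
  have hN (t : ℝ) : |t| < N t := (Nat.le_ceil _).trans_lt (by simp [N])
  refine ⟨fun t ↦ α (N t) t, by simpa [N] using hα0 1, fun t ↦ ?_⟩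
  have heq : (fun s ↦ α (N s) s) =ᶠ[𝓝 t] α (N t) := by
    filter_upwards [(isOpen_lt continuous_abs continuous_const).mem_nhds (hN t)] with s hs
    exact hagree (hN s) hs
  exact (hα (N t) t (hN t)).congr_of_eventuallyEq heq

theorem le_of_hasDerivAt_of_neg_on_Ioo {f S : ℝ → ℝ} {c d : ℝ} (hcd : c < d)
    (hf : ∀ x ∈ Ioo c d, f x < 0) (hS : ∀ t ≥ (0 : ℝ), HasDerivAt S (f (S t)) t)
    (hS0 : S 0 ≤ c) : ∀ t ≥ (0 : ℝ), S t ≤ c := by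
  intro t ht
  have hbarrier (ε : ℝ) (hε : ε ∈ Ioo 0 (d - c)) : S t ≤ c + ε := by
    refine image_le_of_deriv_right_lt_deriv_boundary (B := fun _ ↦ c + ε) (B' := 0)
      (fun s hs ↦ (hS s hs.1).continuousAt.continuousWithinAt)
      (fun s hs ↦ (hS s hs.1).hasDerivWithinAt) (by linarith [hε.1])
      (fun _ ↦ hasDerivAt_const _ _) (fun s _ hs ↦ hf _ ?_) ⟨ht, le_rfl⟩
    rw [hs]
    exact ⟨by linarith [hε.1], by linarith [hε.2]⟩
  by_contra! h
  have hmin := min_le_right (S t - c) (d - c)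
  have := hbarrier (min (S t - c) (d - c) / 2) ⟨by positivity, by linarith⟩
  linarith [min_le_left (S t - c) (d - c)]

theorem ge_of_hasDerivAt_of_pos_on_Ioo {f S : ℝ → ℝ} {c d : ℝ} (hdc : d < c)
    (hf : ∀ x ∈ Ioo d c, 0 < f x) (hS : ∀ t ≥ (0 : ℝ), HasDerivAt S (f (S t)) t)
    (hS0 : c ≤ S 0) : ∀ t ≥ (0 : ℝ), c ≤ S t := by
  have := le_of_hasDerivAt_of_neg_on_Ioo (f := fun x ↦ -f (-x)) (S := fun t ↦ -S t)
    (neg_lt_neg hdc) (fun x hx ↦ neg_neg_iff_pos.2 (hf _ ⟨lt_neg.1 hx.2, neg_lt.1 hx.1⟩))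
    (fun t ht ↦ by simpa only [neg_neg] using (hS t ht).fun_neg) (neg_le_neg hS0)
  exact fun t ht ↦ neg_le_neg_iff.1 (this t ht)

noncomputable def tetherField (k Req x : ℝ) : ℝ := k * (1 / x - 1 / Req)

section
variable {k Req x : ℝ}

theorem tetherField_neg (hk : 0 < k) (hReq : 0 < Req) (hx : Req < x) :
    tetherField k Req x < 0 :=
  mul_neg_of_pos_of_neg hk (sub_neg.2 (one_div_lt_one_div_of_lt hReq hx))

theorem tetherField_pos (hk : 0 < k) (hx0 : 0 < x) (hx : x < Req) :
    0 < tetherField k Req x :=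
  mul_pos hk (sub_pos.2 (one_div_lt_one_div_of_lt hx0 hx))

theorem lipschitzWith_tetherField_max (hk : 0 ≤ k) {ℓ : ℝ} (hℓ : 0 < ℓ) :
    LipschitzWith (k / ℓ ^ 2).toNNReal (fun x ↦ tetherField k Req (max x ℓ)) := by
  refine LipschitzWith.of_dist_le_mul fun x y ↦ ?_
  have hx : 0 < max x ℓ := hℓ.trans_le (le_max_right _ _)
  have hy : 0 < max y ℓ := hℓ.trans_le (le_max_right _ _)
  have hxy : ℓ ^ 2 ≤ max x ℓ * max y ℓ := by
    rw [sq]; exact mul_le_mul (le_max_right _ _) (le_max_right _ _) hℓ.le hx.le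
  rw [Real.coe_toNNReal _ (by positivity), Real.dist_eq, Real.dist_eq]
  calc |tetherField k Req (max x ℓ) - tetherField k Req (max y ℓ)|
      = k * |max x ℓ - max y ℓ| / (max x ℓ * max y ℓ) := by
        have : 1 / max x ℓ - 1 / Req - (1 / max y ℓ - 1 / Req)
            = (max y ℓ - max x ℓ) / (max x ℓ * max y ℓ) := by field_simp; ring
        rw [tetherField, tetherField, ← mul_sub, this, abs_mul, abs_of_nonneg hk, abs_div,
          abs_of_pos (mul_pos hx hy), abs_sub_comm, mul_div_assoc]
    _ ≤ k * |x - y| / ℓ ^ 2 := by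
        have := abs_max_sub_max_le_abs x y ℓ
        gcongr
    _ = k / ℓ ^ 2 * |x - y| := by ring

theorem abs_tetherField_max_le (hk : 0 ≤ k) (hReq : 0 < Req) {ℓ : ℝ} (hℓ : 0 < ℓ)
    (x : ℝ) :
    |tetherField k Req (max x ℓ)| ≤ k * (1 / ℓ + 1 / Req) := by
  have hx : 0 < max x ℓ := hℓ.trans_le (le_max_right _ _)
  rw [tetherField, abs_mul, abs_of_nonneg hk]
  gcongr
  calc |1 / max x ℓ - 1 / Req| ≤ |1 / max x ℓ| + |1 / Req| := abs_sub _ _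
    _ ≤ 1 / ℓ + 1 / Req := by
      rw [abs_of_pos (by positivity), abs_of_pos (by positivity)]
      gcongr
      exact le_max_right _ _

theorem min_le_and_le_max_of_hasDerivAt_of_eqOn_tetherField (hk : 0 < k) (hReq : 0 < Req)
    {R₀ : ℝ} (hR₀ : 0 < R₀) {g S : ℝ → ℝ}
    (hg : EqOn g (tetherField k Req) (Ioi (min R₀ Req / 2)))
    (hS0 : S 0 = R₀) (hS : ∀ t ≥ (0 : ℝ), HasDerivAt S (g (S t)) t) :
    ∀ t ≥ (0 : ℝ), min R₀ Req ≤ S t ∧ S t ≤ max R₀ Req := by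
  have hm : 0 < min R₀ Req := lt_min hR₀ hReq
  refine fun t ht ↦
    ⟨ge_of_hasDerivAt_of_pos_on_Ioo (half_lt_self hm) (fun x hx ↦ ?_) hS
      (hS0 ▸ min_le_left _ _) t ht,
    le_of_hasDerivAt_of_neg_on_Ioo (lt_add_one _) (fun x hx ↦ ?_) hS
      (hS0 ▸ le_max_left _ _) t ht⟩
  · rw [hg hx.1]
    exact tetherField_pos hk (by linarith [hx.1]) (hx.2.trans_le (min_le_right _ _))
  · rw [hg (show min R₀ Req / 2 < x by linarith [hx.1, min_le_max (a := R₀) (b := Req)])]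
    exact tetherField_neg hk hReq ((le_max_right _ _).trans_lt hx.1)

end

/-- Global existence and uniqueness for the tether-radius ODE
`R'(t) = (c_CH/(4μ))·(1/R(t) − 1/R_eq)` with `R_eq = 2π c_CH / F_T`:
for every initial radius `R₀ > 0` there is a unique differentiable solution on
`[0,∞)` with `R(0) = R₀`, and it stays between `min(R₀, R_eq)` and
`max(R₀, R_eq)` (in particular it is positive, hence global). -/
theorem tether_radius_ode_exists_unique
    (μ cCH FT : ℝ) (hμ : 0 < μ) (hc : 0 < cCH) (hF : 0 < FT)
    (Req : ℝ) (hReq : Req = 2 * π * cCH / FT)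
    (R₀ : ℝ) (hR₀ : 0 < R₀) :
    ∃ R : ℝ → ℝ, R 0 = R₀ ∧
      (∀ t ≥ (0 : ℝ), HasDerivAt R ((cCH / (4 * μ)) * (1 / R t - 1 / Req)) t) ∧
      (∀ t ≥ (0 : ℝ), min R₀ Req ≤ R t ∧ R t ≤ max R₀ Req) ∧
      (∀ S : ℝ → ℝ, S 0 = R₀ →
        (∀ t ≥ (0 : ℝ), HasDerivAt S ((cCH / (4 * μ)) * (1 / S t - 1 / Req)) t) →
        ∀ t ≥ (0 : ℝ), S t = R t) := by
  have hReq0 : 0 < Req := hReq ▸ by positivity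
  set k := cCH / (4 * μ)
  have hk : 0 < k := by positivity
  -- strictly below `min R₀ Req`: the barrier at `min R₀ Req` needs `G > 0` just below it
  set ℓ := min R₀ Req / 2
  have hℓ : 0 < ℓ := by positivity
  set G : ℝ → ℝ := fun x ↦ tetherField k Req (max x ℓ)
  have hGeq : EqOn G (tetherField k Req) (Ioi ℓ) := fun x hx ↦ by
    simp only [G, max_eq_left hx.out.le]
  have hGlip := lipschitzWith_tetherField_max (Req := Req) hk.le hℓ
  obtain ⟨R, hR0, hR⟩ := exists_forall_hasDerivAt_of_lipschitzWith_of_norm_le hGlip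
    (L := (k * (1 / ℓ + 1 / Req)).toNNReal)
    (fun x ↦ (abs_tetherField_max_le hk.le hReq0 hℓ x).trans (Real.le_coe_toNNReal _)) R₀
  have hRbd := min_le_and_le_max_of_hasDerivAt_of_eqOn_tetherField hk hReq0 hR₀ hGeq hR0
    fun t _ ↦ hR t
  have hmem {S : ℝ → ℝ} {t : ℝ} (h : min R₀ Req ≤ S t) : S t ∈ Ioi ℓ :=
    (half_lt_self (lt_min hR₀ hReq0)).trans_le h
  refine ⟨R, hR0, fun t ht ↦ (hR t).congr_deriv (hGeq (hmem (hRbd t ht).1)), hRbd,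
    fun S hS0 hS t ht ↦ ?_⟩
  have hSbd := min_le_and_le_max_of_hasDerivAt_of_eqOn_tetherField hk hReq0 hR₀
    (eqOn_refl (tetherField k Req) _) hS0 hS
  exact ODE_solution_unique (v := fun _ ↦ G) (fun _ ↦ hGlip)
    (fun s hs ↦ (hS s hs.1).continuousAt.continuousWithinAt)
    (fun s hs ↦ ((hS s hs.1).congr_deriv (hGeq (hmem (hSbd s hs.1).1)).symm).hasDerivWithinAt)
    (fun s _ ↦ (hR s).continuousAt.continuousWithinAt) (fun s _ ↦ (hR s).hasDerivWithinAt)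
    (hS0.trans hR0.symm) ⟨ht, le_rfl⟩
end

section
/- Let μ > 0, c_CH > 0, F_T > 0 and R_eq = 2π c_CH / F_T. Let R : [0,∞) → ℝ be differentiable with R(t) > 0 and R'(t) = (c_CH/(4μ))·(1/R(t) − 1/R_eq) for all t ≥ 0. Then R is monotone (nonincreasing if R(0) ≥ R_eq, nondecreasing if R(0) ≤ R_eq) and R(t) → R_eq as t → ∞; i.e. the cylinder radius tends to the equilibrium radius R_eq as t → ∞. -/
/-!
With `k = c_CH/(4μ)`, `V = (R - R_eq)²` is a Lyapunov function:
`V' = 2(R - R_eq)·k(1/R - 1/R_eq) = -2k V / (R R_eq) ≤ 0`. Hence `R` never crosses `R_eq`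
(at a crossing `V` would vanish, and then stay zero), which fixes the sign of `R'` and gives
monotonicity. Moreover `R ≤ M := R_eq + |R(0) - R_eq|`, so `V' ≤ -(2k/(M R_eq)) V` and `V`
decays exponentially.
-/

open Real Filter Set Topology

section

variable {f f' : ℝ → ℝ} {a : ℝ}

theorem antitoneOn_Ici_of_hasDerivAt_nonpos (hf : ∀ t ≥ a, HasDerivAt f (f' t) t)
    (hf' : ∀ t ≥ a, f' t ≤ 0) : AntitoneOn f (Ici a) := by
  refine antitoneOn_of_hasDerivWithinAt_nonpos (f' := f') (convex_Ici a)
    (fun t ht => (hf t ht).continuousAt.continuousWithinAt) (fun t ht => ?_) (fun t ht => ?_)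
  all_goals rw [interior_Ici] at ht
  · exact (hf t ht.le).hasDerivWithinAt
  · exact hf' t ht.le

theorem monotoneOn_Ici_of_hasDerivAt_nonneg (hf : ∀ t ≥ a, HasDerivAt f (f' t) t)
    (hf' : ∀ t ≥ a, 0 ≤ f' t) : MonotoneOn f (Ici a) := fun _ hs _ ht hst =>
  neg_le_neg_iff.mp <| antitoneOn_Ici_of_hasDerivAt_nonpos (fun t ht => (hf t ht).neg)
    (fun t ht => neg_nonpos.mpr (hf' t ht)) hs ht hst

end

section

variable {x x' : ℝ → ℝ} {a c κ : ℝ}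

theorem antitoneOn_sq_sub_mul_exp (hx : ∀ t ≥ a, HasDerivAt x (x' t) t)
    (hdecay : ∀ t ≥ a, (x t - c) * x' t ≤ -κ * (x t - c) ^ 2) :
    AntitoneOn (fun t => (x t - c) ^ 2 * exp (2 * κ * t)) (Ici a) := by
  refine antitoneOn_Ici_of_hasDerivAt_nonpos (f' := fun t =>
      2 * (x t - c) * x' t * exp (2 * κ * t) + (x t - c) ^ 2 * (exp (2 * κ * t) * (2 * κ)))
    (fun t ht => ?_) (fun t ht => ?_)
  · have hsq : HasDerivAt (fun t => (x t - c) ^ 2) (2 * (x t - c) * x' t) t := by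
      simpa using ((hx t ht).sub_const c).fun_pow 2
    have hexp : HasDerivAt (fun t => exp (2 * κ * t)) (exp (2 * κ * t) * (2 * κ)) t := by
      simpa using ((hasDerivAt_id' t).const_mul (2 * κ)).exp
    exact hsq.mul hexp
  · have := hdecay t ht
    have := exp_pos (2 * κ * t)
    nlinarith

theorem antitoneOn_sq_sub (hx : ∀ t ≥ a, HasDerivAt x (x' t) t)
    (hdrift : ∀ t ≥ a, (x t - c) * x' t ≤ 0) :
    AntitoneOn (fun t => (x t - c) ^ 2) (Ici a) := by
  simpa using antitoneOn_sq_sub_mul_exp (κ := 0) hx (by simpa using hdrift)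

theorem le_of_antitoneOn_sq_sub (hcont : ContinuousOn x (Ici a))
    (hV : AntitoneOn (fun t => (x t - c) ^ 2) (Ici a)) (h₀ : c ≤ x a) :
    ∀ t ≥ a, c ≤ x t := by
  intro t ht
  by_contra! hlt
  obtain ⟨s, hs, hxs⟩ := intermediate_value_Icc' ht (hcont.mono Icc_subset_Ici_self)
    ⟨hlt.le, h₀⟩
  have hVt : (x t - c) ^ 2 ≤ (x s - c) ^ 2 := hV hs.1 ht hs.2
  rw [hxs, sub_self] at hVt
  nlinarith

theorem ge_of_antitoneOn_sq_sub (hcont : ContinuousOn x (Ici a))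
    (hV : AntitoneOn (fun t => (x t - c) ^ 2) (Ici a)) (h₀ : x a ≤ c) :
    ∀ t ≥ a, x t ≤ c := by
  have hV' : AntitoneOn (fun t => (-x t - -c) ^ 2) (Ici a) := by
    simpa only [neg_sub_neg, ← neg_sub (x _) c, neg_sq] using hV
  exact fun t ht => neg_le_neg_iff.mp (le_of_antitoneOn_sq_sub hcont.neg hV' (neg_le_neg h₀) t ht)

theorem tendsto_of_antitoneOn_sq_sub_mul_exp (hκ : 0 < κ)
    (hV : AntitoneOn (fun t => (x t - c) ^ 2 * exp (κ * t)) (Ici a)) :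
    Tendsto x atTop (𝓝 c) := by
  set C := (x a - c) ^ 2 * exp (κ * a)
  have hbound : ∀ t ≥ a, (x t - c) ^ 2 ≤ C * exp (-(κ * t)) := fun t ht => by
    rw [exp_neg, ← div_eq_mul_inv, le_div_iff₀ (exp_pos _)]
    exact hV self_mem_Ici ht ht
  have hsq : Tendsto (fun t => (x t - c) ^ 2) atTop (𝓝 0) := by
    refine squeeze_zero' (Eventually.of_forall fun t => sq_nonneg _)
      (eventually_ge_atTop a |>.mono hbound) ?_
    simpa using (tendsto_exp_neg_atTop_nhds_zero.comp
      (tendsto_id.const_mul_atTop hκ)).const_mul C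
  rw [← tendsto_sub_nhds_zero_iff, tendsto_zero_iff_abs_tendsto_zero]
  simpa [Function.comp_def, sqrt_sq_eq_abs] using (continuous_sqrt.tendsto 0).comp hsq

end

theorem sub_mul_one_div_sub_one_div_le {k x r M : ℝ} (hk : 0 ≤ k) (hx : 0 < x) (hr : 0 < r)
    (hxM : x ≤ M) : (x - r) * (k * (1 / x - 1 / r)) ≤ -(k / (M * r)) * (x - r) ^ 2 := by
  have hidentity : (x - r) * (k * (1 / x - 1 / r)) = -(k / (x * r)) * (x - r) ^ 2 := by
    field_simp
    ring
  rw [hidentity, neg_mul, neg_mul, neg_le_neg_iff]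
  gcongr

/-- Any positive solution of the tether-radius ODE
`R'(t) = (c_CH/(4μ))·(1/R(t) − 1/R_eq)` with `R_eq = 2π c_CH / F_T` is monotone
(nonincreasing if `R(0) ≥ R_eq`, nondecreasing if `R(0) ≤ R_eq`) and the
cylinder radius tends to the equilibrium radius `R_eq` as `t → ∞`. -/
theorem tether_radius_tendsto_equilibrium
    (μ cCH FT : ℝ) (hμ : 0 < μ) (hc : 0 < cCH) (hF : 0 < FT)
    (Req : ℝ) (hReq : Req = 2 * π * cCH / FT)
    (R : ℝ → ℝ) (hpos : ∀ t ≥ (0 : ℝ), 0 < R t)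
    (hode : ∀ t ≥ (0 : ℝ), HasDerivAt R ((cCH / (4 * μ)) * (1 / R t - 1 / Req)) t) :
    (Req ≤ R 0 → AntitoneOn R (Set.Ici 0)) ∧
      (R 0 ≤ Req → MonotoneOn R (Set.Ici 0)) ∧
      Tendsto R atTop (nhds Req) := by
  set k := cCH / (4 * μ)
  have hk : 0 < k := by positivity
  have hReq₀ : 0 < Req := by rw [hReq]; positivity
  have hcont : ContinuousOn R (Ici 0) := fun t ht => (hode t ht).continuousAt.continuousWithinAt
  have hdrift : ∀ M, ∀ t ≥ (0 : ℝ), R t ≤ M →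
      (R t - Req) * (k * (1 / R t - 1 / Req)) ≤ -(k / (M * Req)) * (R t - Req) ^ 2 :=
    fun M t ht hM => sub_mul_one_div_sub_one_div_le hk.le (hpos t ht) hReq₀ hM
  have hV : AntitoneOn (fun t => (R t - Req) ^ 2) (Ici 0) := by
    refine antitoneOn_sq_sub hode fun t ht => (hdrift (R t) t ht le_rfl).trans ?_
    have := hpos t ht
    exact mul_nonpos_of_nonpos_of_nonneg (neg_nonpos.mpr (by positivity)) (sq_nonneg _)
  refine ⟨fun h₀ => antitoneOn_Ici_of_hasDerivAt_nonpos hode fun t ht => ?_,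
    fun h₀ => monotoneOn_Ici_of_hasDerivAt_nonneg hode fun t ht => ?_, ?_⟩
  · have hReq_le := le_of_antitoneOn_sq_sub hcont hV h₀ t ht
    exact mul_nonpos_of_nonneg_of_nonpos hk.le
      (sub_nonpos.mpr (one_div_le_one_div_of_le hReq₀ hReq_le))
  · have hle_Req := ge_of_antitoneOn_sq_sub hcont hV h₀ t ht
    exact mul_nonneg hk.le (sub_nonneg.mpr (one_div_le_one_div_of_le (hpos t ht) hle_Req))
  · set M := Req + |R 0 - Req|
    have hRM : ∀ t ≥ (0 : ℝ), R t ≤ M := fun t ht => by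
      have hsq : (R t - Req) ^ 2 ≤ |R 0 - Req| ^ 2 := by
        rw [sq_abs]; exact hV self_mem_Ici ht ht
      linarith [le_of_sq_le_sq hsq (abs_nonneg _)]
    exact tendsto_of_antitoneOn_sq_sub_mul_exp (by positivity)
      (antitoneOn_sq_sub_mul_exp hode fun t ht => hdrift M t ht (hRM t ht))
end

section
/- Let μ > 0, c_CH > 0, F_T > 0, R_eq = 2π c_CH / F_T, and let T = 4 μ R_eq² / c_CH be the characteristic relaxation time. Let R : [0,∞) → ℝ be differentiable with R(t) > 0 and R'(t) = (c_CH/(4μ))·(1/R(t) − 1/R_eq) for all t ≥ 0. Then for every rate r with 0 < r < 1/T there exists a constant C ≥ 0 such that |R(t) − R_eq| ≤ C·exp(−r t) for all t ≥ 0. -/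
open Real Filter Topology Set

/-!
Writing `e = R - R_eq`, the equation reads `e' = -k e / (R R_eq)` with `k = c_CH/(4μ)`, so
`exp (2 r t) e(t)²` is non-increasing on any half-line where `r R(t) R_eq ≤ k`. With `r = 0`
this bounds `R`, hence gives some (slow) exponential rate, hence `R → R_eq`. Once `R` is close
to `R_eq`, the condition `r R R_eq ≤ k` holds for every `r < k / R_eq² = 1 / T`, which gives the
decay at rate `r` from some time `t₀` on; on `[0, t₀]` the deviation is bounded anyway.
-/

namespace TetherRadius

variable {k Req r s : ℝ} {R : ℝ → ℝ}

lemma antitoneOn_exp_mul_sq_sub (hReq : 0 < Req) (hpos : ∀ t ≥ s, 0 < R t)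
    (hode : ∀ t ≥ s, HasDerivAt R (k * (1 / R t - 1 / Req)) t)
    (hrate : ∀ t ≥ s, r * (R t * Req) ≤ k) :
    AntitoneOn (fun t => exp (2 * r * t) * (R t - Req) ^ 2) (Ici s) := by
  have hderiv : ∀ t ≥ s, HasDerivAt (fun t => exp (2 * r * t) * (R t - Req) ^ 2)
      (2 * exp (2 * r * t) * (R t - Req) ^ 2 * (r - k / (R t * Req))) t := by
    intro t ht
    have hexp : HasDerivAt (fun t => exp (2 * r * t)) (exp (2 * r * t) * (2 * r)) t := by
      simpa using ((hasDerivAt_id t).const_mul (2 * r)).exp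
    have hsq : HasDerivAt (fun t => (R t - Req) ^ 2)
        (2 * (R t - Req) * (k * (1 / R t - 1 / Req))) t := by
      simpa using ((hode t ht).sub_const Req).fun_pow 2
    refine (hexp.mul hsq).congr_deriv ?_
    have := (hpos t ht).ne'
    have := hReq.ne'
    field_simp
    ring
  refine antitoneOn_of_hasDerivWithinAt_nonpos (convex_Ici s)
    (fun t ht => (hderiv t ht).continuousAt.continuousWithinAt)
    (fun t ht => (hderiv t (interior_subset ht)).hasDerivWithinAt) fun t ht => ?_
  have ht : s ≤ t := interior_subset (s := Ici s) ht
  have hRt := hpos t ht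
  have hr : r ≤ k / (R t * Req) := (le_div_iff₀ (by positivity)).2 (hrate t ht)
  exact mul_nonpos_of_nonneg_of_nonpos (by positivity) (sub_nonpos.2 hr)

lemma abs_sub_le_mul_exp (hReq : 0 < Req) (hpos : ∀ t ≥ s, 0 < R t)
    (hode : ∀ t ≥ s, HasDerivAt R (k * (1 / R t - 1 / Req)) t)
    (hrate : ∀ t ≥ s, r * (R t * Req) ≤ k) :
    ∀ t ≥ s, |R t - Req| ≤ |R s - Req| * exp (-r * (t - s)) := by
  intro t ht
  have hmono : exp (2 * r * t) * (R t - Req) ^ 2 ≤ exp (2 * r * s) * (R s - Req) ^ 2 :=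
    antitoneOn_exp_mul_sq_sub hReq hpos hode hrate self_mem_Ici ht ht
  have hsplit : exp (2 * r * s) = exp (2 * r * t) * exp (-r * (t - s)) ^ 2 := by
    rw [← exp_nat_mul, ← exp_add]
    ring_nf
  rw [hsplit] at hmono
  rw [← abs_of_pos (exp_pos (-r * (t - s))), ← abs_mul, ← sq_le_sq]
  exact le_of_mul_le_mul_left (hmono.trans_eq (by ring)) (exp_pos (2 * r * t))

lemma abs_sub_le_abs_sub_of_le (hk : 0 ≤ k) (hReq : 0 < Req) (hpos : ∀ t ≥ s, 0 < R t)
    (hode : ∀ t ≥ s, HasDerivAt R (k * (1 / R t - 1 / Req)) t) :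
    ∀ t ≥ s, |R t - Req| ≤ |R s - Req| := by
  simpa using abs_sub_le_mul_exp (r := 0) hReq hpos hode fun t _ => by simpa using hk

lemma tendsto_atTop (hk : 0 < k) (hReq : 0 < Req) (hpos : ∀ t ≥ 0, 0 < R t)
    (hode : ∀ t ≥ 0, HasDerivAt R (k * (1 / R t - 1 / Req)) t) :
    Tendsto R atTop (𝓝 Req) := by
  set D := |R 0 - Req|
  have hbound : ∀ t ≥ 0, |R t - Req| ≤ D := abs_sub_le_abs_sub_of_le hk.le hReq hpos hode
  have hD : 0 ≤ D := abs_nonneg _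
  set ρ := k / ((Req + D) * Req)
  have hρ : 0 < ρ := by positivity
  have hslow : ∀ t ≥ 0, |R t - Req| ≤ D * exp (-ρ * t) := by
    have hrate : ∀ t ≥ 0, ρ * (R t * Req) ≤ k := fun t ht => by
      have := hpos t ht
      rw [← le_div_iff₀ (by positivity)]
      refine div_le_div_of_nonneg_left hk.le (by positivity) ?_
      gcongr
      linarith [le_abs_self (R t - Req), hbound t ht]
    simpa using abs_sub_le_mul_exp hReq hpos hode hrate
  rw [tendsto_iff_dist_tendsto_zero]
  refine squeeze_zero' (g := fun t => D * exp (-ρ * t)) (.of_forall fun _ => dist_nonneg) ?_ ?_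
  · filter_upwards [eventually_ge_atTop 0] with t ht using (hslow t ht).trans_eq' (dist_eq _ _)
  · simpa using (tendsto_exp_neg_atTop_nhds_zero.comp
      (tendsto_id.const_mul_atTop hρ)).const_mul D

end TetherRadius

lemma abs_le_mul_exp_of_le_of_decay {f : ℝ → ℝ} {D r t₀ : ℝ} (hr : 0 ≤ r)
    (hbound : ∀ t ≥ 0, |f t| ≤ D)
    (hdecay : ∀ t ≥ t₀, |f t| ≤ D * exp (-r * (t - t₀))) :
    ∀ t ≥ 0, |f t| ≤ D * exp (r * t₀) * exp (-r * t) := by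
  intro t ht
  rw [mul_assoc, ← exp_add, show r * t₀ + -r * t = -r * (t - t₀) by ring]
  rcases le_total t₀ t with h | h
  · exact hdecay t h
  · calc |f t| ≤ D := hbound t ht
      _ ≤ D * exp (-r * (t - t₀)) :=
        le_mul_of_one_le_right ((abs_nonneg _).trans (hbound t ht))
          (one_le_exp (by nlinarith))

/-- Exponential convergence of the tether radius towards equilibrium: with
`R_eq = 2π c_CH / F_T` and characteristic relaxation time `T = 4 μ R_eq² / c_CH`,
any positive solution of `R'(t) = (c_CH/(4μ))·(1/R(t) − 1/R_eq)` satisfies, for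
every rate `0 < r < 1/T`, a bound `|R(t) − R_eq| ≤ C·exp(−r t)` on `[0,∞)`. -/
theorem tether_radius_exponential_decay
    (μ cCH FT : ℝ) (hμ : 0 < μ) (hc : 0 < cCH) (hF : 0 < FT)
    (Req : ℝ) (hReq : Req = 2 * π * cCH / FT)
    (T : ℝ) (hT : T = 4 * μ * Req ^ 2 / cCH)
    (R : ℝ → ℝ) (hpos : ∀ t ≥ (0 : ℝ), 0 < R t)
    (hode : ∀ t ≥ (0 : ℝ), HasDerivAt R ((cCH / (4 * μ)) * (1 / R t - 1 / Req)) t) :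
    ∀ r : ℝ, 0 < r → r < 1 / T →
      ∃ C : ℝ, 0 ≤ C ∧ ∀ t ≥ (0 : ℝ), |R t - Req| ≤ C * Real.exp (-r * t) := by
  intro r hr hrT
  set k := cCH / (4 * μ)
  have hk : 0 < k := by positivity
  have hReq_pos : 0 < Req := by rw [hReq]; positivity
  have hrk : r * (Req * Req) < k := by
    rw [hT, one_div_div, lt_div_iff₀ (by positivity)] at hrT
    rw [lt_div_iff₀ (by positivity)]
    nlinarith
  have hlim := TetherRadius.tendsto_atTop hk hReq_pos hpos hode
  obtain ⟨t₀, ht₀⟩ :=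
    eventually_atTop.1 <| ((hlim.mul_const Req).const_mul r).eventually_lt_const hrk
  set t₁ := max t₀ 0
  have hfast := TetherRadius.abs_sub_le_mul_exp (s := t₁) hReq_pos
    (fun t ht => hpos t (le_of_max_le_right ht)) (fun t ht => hode t (le_of_max_le_right ht))
    fun t ht => (ht₀ t (le_of_max_le_left ht)).le
  have hbound := TetherRadius.abs_sub_le_abs_sub_of_le hk.le hReq_pos hpos hode
  refine ⟨|R 0 - Req| * exp (r * t₁), by positivity,
    abs_le_mul_exp_of_le_of_decay hr.le hbound fun t ht => (hfast t ht).trans ?_⟩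
  exact mul_le_mul_of_nonneg_right (hbound t₁ (le_max_right _ _)) (exp_pos _).le
end

section
/- Let μ > 0, c_CH > 0, F_T > 0, R_eq = 2π c_CH / F_T, and let T = 4 μ R_eq² / c_CH be the characteristic relaxation time. Let R : [0,∞) → ℝ be differentiable with R(t) > 0 and R'(t) = (c_CH/(4μ))·(1/R(t) − 1/R_eq) for all t ≥ 0. Then the limit C = lim_{t→∞} exp(t/T)·(R(t) − R_eq) exists and is finite; i.e. the final decay towards equilibrium has the asymptotic behavior R(t) = R_eq + C·exp(−t/T) + o(exp(−t/T)) as t → ∞. -/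
open Real Filter Set Topology

/-!
Separating variables in `R' = k (1/R - 1/a)` gives the first integral
`exp (k t / a² + R / a) (R - a)`, constant along solutions. Since `R > 0`, this yields
`|R t - a| ≤ |A| exp (-k t / a²)`, so `R → a`, and then
`exp (k t / a²) (R t - a) = A exp (-R t / a) → A / e`. With `k = c_CH / (4μ)` and `a = R_eq`
the rate `k / a²` is exactly `1 / T`.
-/

theorem eq_of_hasDerivAt_zero_of_mem_Ici {f : ℝ → ℝ} {b : ℝ}
    (hf : ∀ s ∈ Ici b, HasDerivAt f 0 s) {t : ℝ} (ht : t ∈ Ici b) : f t = f b :=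
  constant_of_has_deriv_right_zero (fun s hs => (hf s hs.1).continuousAt.continuousWithinAt)
    (fun s hs => (hf s hs.1).hasDerivWithinAt) t ⟨ht, le_rfl⟩

/-- The first integral of `R' = k (1/R - 1/a)`. -/
noncomputable def relaxationFirstIntegral (k a : ℝ) (R : ℝ → ℝ) (t : ℝ) : ℝ :=
  exp (k / a ^ 2 * t + R t / a) * (R t - a)

section RelaxationODE

variable {k a : ℝ} {R : ℝ → ℝ}

theorem hasDerivAt_relaxationFirstIntegral (ha : a ≠ 0) {s : ℝ} (hRs : R s ≠ 0)
    (hR : HasDerivAt R (k * (1 / R s - 1 / a)) s) :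
    HasDerivAt (relaxationFirstIntegral k a R) 0 s := by
  have hexponent : HasDerivAt (fun u => k / a ^ 2 * u + R u / a)
      (k / a ^ 2 * 1 + k * (1 / R s - 1 / a) / a) s :=
    ((hasDerivAt_id s).const_mul _).add (hR.div_const a)
  refine (hexponent.exp.mul (hR.sub_const a)).congr_deriv ?_
  field_simp
  ring

theorem sub_eq_relaxationFirstIntegral_mul_exp (t : ℝ) :
    R t - a = relaxationFirstIntegral k a R t * exp (-(k / a ^ 2 * t + R t / a)) := by
  rw [relaxationFirstIntegral, mul_right_comm, ← exp_add, add_neg_cancel, exp_zero, one_mul]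

theorem relaxationFirstIntegral_eq_of_mem_Ici (ha : a ≠ 0)
    (hpos : ∀ t ≥ (0 : ℝ), 0 < R t)
    (hode : ∀ t ≥ (0 : ℝ), HasDerivAt R (k * (1 / R t - 1 / a)) t) {t : ℝ} (ht : 0 ≤ t) :
    relaxationFirstIntegral k a R t = relaxationFirstIntegral k a R 0 :=
  eq_of_hasDerivAt_zero_of_mem_Ici
    (fun s hs => hasDerivAt_relaxationFirstIntegral ha (hpos s hs).ne' (hode s hs)) ht

theorem abs_sub_le_of_relaxationFirstIntegral_eq (ha : 0 < a) {A t : ℝ} (hRt : 0 < R t)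
    (hA : relaxationFirstIntegral k a R t = A) :
    |R t - a| ≤ |A| * exp (-(k / a ^ 2 * t)) := by
  rw [sub_eq_relaxationFirstIntegral_mul_exp, hA, abs_mul, abs_exp]
  gcongr
  linarith [div_pos hRt ha]

theorem tendsto_of_relaxationFirstIntegral_eq (hk : 0 < k) (ha : 0 < a) {A : ℝ}
    (hpos : ∀ t ≥ (0 : ℝ), 0 < R t) (hA : ∀ t ≥ (0 : ℝ), relaxationFirstIntegral k a R t = A) :
    Tendsto R atTop (𝓝 a) := by
  have hdecay : Tendsto (fun t => |A| * exp (-(k / a ^ 2 * t))) atTop (𝓝 0) := by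
    have hrate : Tendsto (fun t => k / a ^ 2 * t) atTop atTop :=
      tendsto_id.const_mul_atTop (by positivity)
    simpa using (tendsto_exp_atBot.comp (tendsto_neg_atTop_atBot.comp hrate)).const_mul |A|
  have hsub : Tendsto (fun t => R t - a) atTop (𝓝 0) := by
    refine squeeze_zero_norm' ?_ hdecay
    filter_upwards [eventually_ge_atTop 0] with t ht
    exact abs_sub_le_of_relaxationFirstIntegral_eq ha (hpos t ht) (hA t ht)
  simpa using hsub.add_const a

theorem tendsto_exp_mul_sub_of_hasDerivAt (hk : 0 < k) (ha : 0 < a)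
    (hpos : ∀ t ≥ (0 : ℝ), 0 < R t)
    (hode : ∀ t ≥ (0 : ℝ), HasDerivAt R (k * (1 / R t - 1 / a)) t) :
    Tendsto (fun t => exp (k / a ^ 2 * t) * (R t - a)) atTop
      (𝓝 (relaxationFirstIntegral k a R 0 * exp (-1))) := by
  set A := relaxationFirstIntegral k a R 0
  have hA : ∀ t ≥ (0 : ℝ), relaxationFirstIntegral k a R t = A := fun t ht =>
    relaxationFirstIntegral_eq_of_mem_Ici ha.ne' hpos hode ht
  have hR : Tendsto (fun t => -(R t / a)) atTop (𝓝 (-1)) := by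
    simpa [ha.ne'] using ((tendsto_of_relaxationFirstIntegral_eq hk ha hpos hA).div_const a).neg
  refine ((continuous_exp.tendsto _).comp hR |>.const_mul A).congr' ?_
  filter_upwards [eventually_ge_atTop 0] with t ht
  rw [sub_eq_relaxationFirstIntegral_mul_exp, hA t ht, mul_left_comm, ← exp_add,
    Function.comp_apply]
  ring_nf

end RelaxationODE

/-- Asymptotics of the final decay of the tether radius: with
`R_eq = 2π c_CH / F_T` and characteristic relaxation time `T = 4 μ R_eq² / c_CH`,
for any positive solution of `R'(t) = (c_CH/(4μ))·(1/R(t) − 1/R_eq)` the limit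
`C = lim_{t→∞} exp(t/T)·(R(t) − R_eq)` exists and is finite, i.e.
`R(t) = R_eq + C·exp(−t/T) + o(exp(−t/T))` as `t → ∞`. -/
theorem tether_radius_asymptotic_decay
    (μ cCH FT : ℝ) (hμ : 0 < μ) (hc : 0 < cCH) (hF : 0 < FT)
    (Req : ℝ) (hReq : Req = 2 * π * cCH / FT)
    (T : ℝ) (hT : T = 4 * μ * Req ^ 2 / cCH)
    (R : ℝ → ℝ) (hpos : ∀ t ≥ (0 : ℝ), 0 < R t)
    (hode : ∀ t ≥ (0 : ℝ), HasDerivAt R ((cCH / (4 * μ)) * (1 / R t - 1 / Req)) t) :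
    ∃ C : ℝ, Tendsto (fun t => Real.exp (t / T) * (R t - Req)) atTop (nhds C) := by
  have hReq_pos : 0 < Req := by rw [hReq]; positivity
  have hrate : ∀ t, t / T = cCH / (4 * μ) / Req ^ 2 * t := fun t => by
    rw [hT]
    field_simp
  simp_rw [hrate]
  exact ⟨_, tendsto_exp_mul_sub_of_hasDerivAt (by positivity) hReq_pos hpos hode⟩
end
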